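/- Let F = ⋀_{i=1}^M ⋁_{j=1}^{m_i} (p_{ij} ▷_{ij} 0) be a polynomial formula in n real variables in which every relational operator ▷_{ij} belongs to {<, >, ≠}. If F is satisfiable over ℝ^n, then F has a model all of whose coordinates are rational; that is, F is satisfiable over ℝ^n if and only if it is satisfiable over ℚ^n. -/
import Mathlib


open MvPolynomial

/-- A strict relational operator, one of `<`, `>`, `≠`. -/
inductive StrictRel : Type
  | lt : StrictRel
  | gt : StrictRel
  | ne : StrictRel

/-- Interpretation of the atom `v ▷ 0` for a strict relational operator `▷`. -/
def StrictRel.holds : StrictRel → ℝ → Prop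
  | .lt, v => v < 0
  | .gt, v => v > 0
  | .ne, v => v ≠ 0

theorem strictRel_isOpen (r : StrictRel) : IsOpen {v : ℝ | r.holds v} := by
  cases r with
  | lt => exact isOpen_Iio
  | gt => exact isOpen_Ioi
  | ne => exact isOpen_compl_singleton

/-- A polynomial formula `⋀ᵢ ⋁ⱼ (pᵢⱼ ▷ᵢⱼ 0)` in `n` real variables in which every
relational operator is one of `<`, `>`, `≠` is satisfiable over `ℝⁿ` if and only if it
has a model all of whose coordinates are rational. -/
theorem stmt_12 {n : ℕ} (M : ℕ) (m : Fin M → ℕ)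
    (p : (i : Fin M) → Fin (m i) → MvPolynomial (Fin n) ℝ)
    (op : (i : Fin M) → Fin (m i) → StrictRel) :
    (∃ a : Fin n → ℝ, ∀ i : Fin M, ∃ j : Fin (m i),
      (op i j).holds (eval a (p i j))) ↔
    (∃ q : Fin n → ℚ, ∀ i : Fin M, ∃ j : Fin (m i),
      (op i j).holds (eval (fun k => (q k : ℝ)) (p i j))) := by
  constructor
  · rintro ⟨a, ha⟩
    choose j hj using ha
    set U : Set (Fin n → ℝ) :=
      ⋂ i : Fin M, {x | (op i (j i)).holds (eval x (p i (j i)))} with hU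
    have hUopen : IsOpen U := by
      refine isOpen_iInter_of_finite fun i => ?_
      exact (strictRel_isOpen (op i (j i))).preimage (MvPolynomial.continuous_eval _)
    have haU : a ∈ U := Set.mem_iInter.2 fun i => hj i
    have hdense : Dense (Set.pi Set.univ fun _ : Fin n => Set.range ((↑) : ℚ → ℝ)) :=
      dense_pi Set.univ fun i _ => Rat.denseRange_cast
    obtain ⟨x, hx, hxU⟩ := hdense.exists_mem_open hUopen ⟨a, haU⟩
    choose q hq using fun k => hx k (Set.mem_univ k)
    have hxq : x = fun k => (q k : ℝ) := funext fun k => (hq k).symm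
    refine ⟨q, fun i => ⟨j i, ?_⟩⟩
    rw [← hxq]
    exact Set.mem_iInter.1 hxU i
  · rintro ⟨q, hq⟩
    exact ⟨fun k => (q k : ℝ), hq⟩
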